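/- Fix a positive integer r and a natural number n. The number of lists l of integers of length (r+1)*n such that every entry of l equals r or −1, exactly n entries equal r (hence exactly r*n entries equal −1), and every prefix of l has nonnegative sum, equals choose((r+1)*n, n)/(r*n+1). -/

import Mathlib

/-!
Appending a final `-1` identifies `r`-Dyck words with the Łukasiewicz words (total sum `-1`,
every proper prefix sum `≥ 0`) among the `choose ((r+1)n+1) n` words with `n` letters `r` and
`rn+1` letters `-1`. By the cycle lemma every word `b` of sum `-1` and length `m` is
`c.rotate k` for exactly one pair of a Łukasiewicz word `c` and `k < m`, so
`((r+1)n+1) · #Dyck = choose ((r+1)n+1) n`; the identity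
`choose ((r+1)n+1) n · (rn+1) = choose ((r+1)n) n · ((r+1)n+1)` finishes the count.
-/

open List

def IsLukasiewicz (c : List ℤ) : Prop :=
  c.sum = -1 ∧ ∀ j < c.length, 0 ≤ (c.take j).sum

theorem isLukasiewicz_append_neg_one_iff {l : List ℤ} :
    IsLukasiewicz (l ++ [-1]) ↔ l.sum = 0 ∧ ∀ p, p <+: l → 0 ≤ p.sum := by
  have htake : ∀ j ≤ l.length, (l ++ [-1]).take j = l.take j := fun j hj =>
    take_append_of_le_length hj
  simp only [IsLukasiewicz, sum_append, sum_singleton, length_append, length_singleton,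
    Nat.lt_succ_iff]
  refine and_congr (by omega) ⟨fun h p hp => ?_, fun h j hj => ?_⟩
  · rw [prefix_iff_eq_take.mp hp, ← htake _ hp.length_le]
    exact h _ hp.length_le
  · rw [htake j hj]
    exact h _ (take_prefix j l)

theorem IsLukasiewicz.neg_of_append_singleton {l : List ℤ} {x : ℤ}
    (h : IsLukasiewicz (l ++ [x])) : x < 0 := by
  have hl : 0 ≤ l.sum := by simpa using h.2 l.length (by simp)
  have hsum : l.sum + x = -1 := by simpa using h.1
  omega

theorem sum_take_rotate_of_add_le {b : List ℤ} {i j : ℕ} (hij : i + j ≤ b.length) :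
    ((b.rotate i).take j).sum = (b.take (i + j)).sum - (b.take i).sum := by
  rw [rotate_eq_drop_append_take (by omega), take_append_of_le_length (by simp; omega),
    take_add, sum_append]
  ring

theorem sum_take_rotate_of_length_le_add {b : List ℤ} {i j : ℕ} (hi : i ≤ b.length)
    (hj : j ≤ b.length) (hij : b.length ≤ i + j) :
    ((b.rotate i).take j).sum = b.sum + (b.take (i + j - b.length)).sum - (b.take i).sum := by
  have hdrop : (b.drop i).sum = b.sum - (b.take i).sum := by
    linarith [sum_take_add_sum_drop b i]
  rw [rotate_eq_drop_append_take hi, take_append, take_of_length_le (by simp; omega),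
    sum_append, take_take, length_drop, hdrop, min_eq_left (by omega),
    show j - (b.length - i) = i + j - b.length by omega]
  ring

theorem exists_earliest_argmin {α : Type*} [LinearOrder α] (f : ℕ → α) {m : ℕ} (hm : 0 < m) :
    ∃ i < m, (∀ j < m, f i ≤ f j) ∧ ∀ j < i, f i < f j := by
  classical
  have hex : ∃ i, i < m ∧ ∀ j < m, f i ≤ f j := by
    obtain ⟨i, hi, hmin⟩ := Finset.exists_min_image (Finset.range m) f ⟨0, by simpa⟩
    exact ⟨i, by simpa using hi, fun j hj => hmin j (by simpa)⟩
  obtain ⟨hlt, hmin⟩ := Nat.find_spec hex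
  refine ⟨Nat.find hex, hlt, hmin, fun j hj => ?_⟩
  by_contra! hle
  exact Nat.find_min hex hj ⟨hj.trans hlt, fun k hk => hle.trans (hmin k hk)⟩

-- Rotate so that the word starts right after the first minimum of its prefix sums.
theorem exists_isLukasiewicz_rotate {b : List ℤ} (hb : b.sum = -1) :
    ∃ i < b.length, IsLukasiewicz (b.rotate i) := by
  have hm : 0 < b.length := length_pos_of_ne_nil (by rintro rfl; simp at hb)
  obtain ⟨i, hi, hmin, hfirst⟩ := exists_earliest_argmin (fun j => (b.take j).sum) hm
  refine ⟨i, hi, by rw [(rotate_perm b i).sum_eq, hb], fun j hj => ?_⟩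
  rw [length_rotate] at hj
  rcases le_or_gt (i + j) b.length with hle | hgt
  · rw [sum_take_rotate_of_add_le hle]
    rcases hle.lt_or_eq with hlt | heq
    · linarith [hmin _ hlt]
    · have h0 : (b.take i).sum < 0 := by simpa using hfirst 0 (by omega)
      rw [heq, take_length, hb]
      linarith
  · rw [sum_take_rotate_of_length_le_add hi.le hj.le hgt.le, hb]
    linarith [hfirst (i + j - b.length) (by omega)]

theorem IsLukasiewicz.eq_zero_of_isLukasiewicz_rotate {c : List ℤ} {k : ℕ}
    (hc : IsLukasiewicz c) (hck : IsLukasiewicz (c.rotate k)) (hk : k < c.length) : k = 0 := by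
  by_contra hk0
  have h₁ := hc.2 k hk
  have h₂ := hck.2 (c.length - k) (by simp; omega)
  rw [sum_take_rotate_of_add_le (by omega), Nat.add_sub_cancel' hk.le, take_length, hc.1] at h₂
  linarith

theorem IsLukasiewicz.rotate_inj {c₁ c₂ : List ℤ} {k₁ k₂ : ℕ} (hc₁ : IsLukasiewicz c₁)
    (hc₂ : IsLukasiewicz c₂) (hk₁ : k₁ < c₁.length) (hk₂ : k₂ < c₂.length)
    (h : c₁.rotate k₁ = c₂.rotate k₂) : k₁ = k₂ ∧ c₁ = c₂ := by
  wlog hle : k₁ ≤ k₂ generalizing c₁ c₂ k₁ k₂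
  · obtain ⟨hk, hc⟩ := this hc₂ hc₁ hk₂ hk₁ h.symm (by omega)
    exact ⟨hk.symm, hc.symm⟩
  have hc : c₁ = c₂.rotate (k₂ - k₁) := by
    rwa [← Nat.sub_add_cancel hle, ← rotate_rotate, rotate_eq_rotate] at h
  have hk : k₂ - k₁ = 0 := hc₂.eq_zero_of_isLukasiewicz_rotate (hc ▸ hc₁) (by omega)
  rw [hk, rotate_zero] at hc
  exact ⟨by omega, hc⟩

theorem card_eq_mul_card_isLukasiewicz {A : Set (List ℤ)} {m : ℕ}
    (hlen : ∀ b ∈ A, b.length = m) (hsum : ∀ b ∈ A, b.sum = -1)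
    (hrot : ∀ b ∈ A, ∀ k, b.rotate k ∈ A) :
    Nat.card A = m * Nat.card ↥{c ∈ A | IsLukasiewicz c} := by
  let f : Fin m × ↥{c ∈ A | IsLukasiewicz c} → A := fun p => ⟨p.2.1.rotate p.1, hrot _ p.2.2.1 _⟩
  have hf : Function.Bijective f := by
    refine ⟨?_, ?_⟩
    · rintro ⟨k₁, c₁, hA₁, hc₁⟩ ⟨k₂, c₂, hA₂, hc₂⟩ h
      obtain ⟨hk, rfl⟩ := hc₁.rotate_inj hc₂ (by simp [hlen c₁ hA₁]) (by simp [hlen c₂ hA₂])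
        (congrArg Subtype.val h)
      obtain rfl : k₁ = k₂ := Fin.ext hk
      rfl
    · rintro ⟨b, hb⟩
      obtain ⟨i, hi, hbi⟩ := exists_isLukasiewicz_rotate (hsum b hb)
      rw [hlen b hb] at hi
      refine ⟨(⟨(m - i) % m, Nat.mod_lt _ (by omega)⟩, ⟨b.rotate i, hrot b hb i, hbi⟩), ?_⟩
      apply Subtype.ext
      show (b.rotate i).rotate ((m - i) % m) = b
      rw [rotate_rotate, ← rotate_mod, hlen b hb, Nat.add_mod_mod, Nat.add_sub_cancel' hi.le,
        Nat.mod_self, rotate_zero]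
  rw [← Nat.card_eq_of_bijective f hf, Nat.card_prod, Nat.card_eq_fintype_card,
    Fintype.card_fin]

def binaryWords {α : Type*} [DecidableEq α] (a b : α) (m k : ℕ) : Set (List α) :=
  {l | l.length = m ∧ (∀ x ∈ l, x = a ∨ x = b) ∧ l.count a = k}

section BinaryWords

variable {α : Type*} [DecidableEq α] {a b : α} {m k : ℕ}

theorem count_ofFn_ite (hab : a ≠ b) (t : Finset (Fin m)) :
    (ofFn fun j => if j ∈ t then a else b).count a = t.card := by
  rw [← Multiset.coe_count, ← Fin.univ_val_map, Multiset.count_map, ← Finset.filter_val,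
    ← Finset.card_def]
  congr 1
  ext j
  by_cases hj : j ∈ t <;> simp [hj, hab]

theorem card_binaryWords (hab : a ≠ b) : Nat.card (binaryWords a b m k) = m.choose k := by
  let f : {t : Finset (Fin m) // t.card = k} → binaryWords a b m k := fun t =>
    ⟨ofFn fun j => if j ∈ t.1 then a else b, by simp, by
      simp only [mem_ofFn]; rintro x ⟨j, rfl⟩; split_ifs <;> simp, by
      rw [count_ofFn_ite hab, t.2]⟩
  have hf : Function.Bijective f := by
    refine ⟨fun t₁ t₂ h => ?_, fun ⟨l, hlen, hmem, hcount⟩ => ?_⟩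
    · have h' := ofFn_injective (congrArg Subtype.val h)
      ext j
      have := congrFun h' j
      by_cases h₁ : j ∈ t₁.1 <;> by_cases h₂ : j ∈ t₂.1 <;> simp_all [hab.symm]
    · let t := Finset.univ.filter fun j : Fin m => l[j.1]'(by omega) = a
      have hl : l = ofFn fun j => if j ∈ t then a else b := by
        refine ext_getElem (by simp [hlen]) fun j h₁ h₂ => ?_
        rw [List.getElem_ofFn]
        split_ifs with hj
        · exact (Finset.mem_filter.mp hj).2
        · exact (hmem _ (getElem_mem h₁)).resolve_left fun h => hj (by simp [t, h])
      refine ⟨⟨t, ?_⟩, Subtype.ext hl.symm⟩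
      rw [← count_ofFn_ite hab, ← hl, hcount]
  rw [← Nat.card_eq_of_bijective f hf, Nat.card_eq_fintype_card, Fintype.card_finset_len,
    Fintype.card_fin]

theorem rotate_mem_binaryWords {l : List α} (hl : l ∈ binaryWords a b m k) (i : ℕ) :
    l.rotate i ∈ binaryWords a b m k := by
  obtain ⟨hlen, hab, hcount⟩ := hl
  exact ⟨by simp [hlen], fun x hx => hab x (mem_rotate.mp hx),
    by rw [(rotate_perm l i).count_eq, hcount]⟩

end BinaryWords

theorem sum_eq_of_forall_mem_eq_or_eq {a b : ℤ} {l : List ℤ} (hab : ∀ x ∈ l, x = a ∨ x = b) :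
    l.sum = (a - b) * l.count a + b * l.length := by
  induction l with
  | nil => simp
  | cons x l ih =>
    have ih := ih fun y hy => hab y (mem_cons_of_mem x hy)
    by_cases hx : x = a
    · subst hx
      rw [sum_cons, count_cons_self, ih, length_cons]
      push_cast
      ring
    · rw [sum_cons, count_cons_of_ne hx, ih, length_cons, (hab x mem_cons_self).resolve_left hx]
      push_cast
      ring

def rDyckWords (r n : ℕ) : Set (List ℤ) :=
  {l | l.length = (r + 1) * n ∧ (∀ x ∈ l, x = (r : ℤ) ∨ x = -1) ∧ l.count (r : ℤ) = n ∧
    ∀ p : List ℤ, p <+: l → 0 ≤ p.sum}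

theorem image_append_neg_one_rDyckWords (r n : ℕ) :
    (· ++ [-1]) '' rDyckWords r n =
      {c ∈ binaryWords (r : ℤ) (-1) ((r + 1) * n + 1) n | IsLukasiewicz c} := by
  have hne : (-1 : ℤ) ≠ r := by omega
  ext c
  constructor
  · rintro ⟨l, ⟨hlen, hmem, hcount, hpre⟩, rfl⟩
    have hsum : l.sum = 0 := by
      rw [sum_eq_of_forall_mem_eq_or_eq hmem, hcount, hlen]
      push_cast
      ring
    refine ⟨⟨by simp [hlen], ?_, by simp [count_append, hcount, hne]⟩,
      isLukasiewicz_append_neg_one_iff.mpr ⟨hsum, hpre⟩⟩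
    simp only [mem_append, mem_singleton]
    rintro x (hx | rfl)
    exacts [hmem x hx, Or.inr rfl]
  · rintro ⟨⟨hlen, hmem, hcount⟩, hc⟩
    obtain rfl | ⟨l, x, rfl⟩ := eq_nil_or_concat' c
    · simp [IsLukasiewicz] at hc
    obtain rfl : x = -1 := by
      have := hc.neg_of_append_singleton
      rcases hmem x (by simp) with rfl | rfl <;> omega
    refine ⟨l, ⟨by simpa using hlen, fun y hy => hmem y (by simp [hy]), ?_,
      (isLukasiewicz_append_neg_one_iff.mp hc).2⟩, rfl⟩
    simpa [count_append, hne] using hcount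

theorem dyck_sequences_card_general (r : ℕ) (n : ℕ) :
    Nat.card {l : List ℤ //
        l.length = (r + 1) * n ∧
        (∀ x ∈ l, x = (r : ℤ) ∨ x = -1) ∧
        l.count (r : ℤ) = n ∧
        (∀ p : List ℤ, p <+: l → 0 ≤ p.sum)} =
      Nat.choose ((r + 1) * n) n / (r * n + 1) := by
  change Nat.card (rDyckWords r n) = _
  have hsum : ∀ b ∈ binaryWords (r : ℤ) (-1) ((r + 1) * n + 1) n, b.sum = -1 := by
    rintro b ⟨hlen, hmem, hcount⟩
    rw [sum_eq_of_forall_mem_eq_or_eq hmem, hcount, hlen]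
    push_cast
    ring
  have hcycle := card_eq_mul_card_isLukasiewicz (fun b hb => hb.1) hsum
    (fun b hb => rotate_mem_binaryWords hb)
  rw [card_binaryWords (by omega), ← image_append_neg_one_rDyckWords,
    Nat.card_image_of_injective (append_left_injective _)] at hcycle
  have hchoose := Nat.choose_mul_succ_eq ((r + 1) * n) n
  rw [show (r + 1) * n + 1 - n = r * n + 1 by rw [add_mul, one_mul]; omega] at hchoose
  have hcard : (r * n + 1) * Nat.card (rDyckWords r n) = ((r + 1) * n).choose n := by
    refine Nat.eq_of_mul_eq_mul_right (by omega : 0 < (r + 1) * n + 1) ?_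
    rw [hchoose, hcycle]
    ring
  rw [← hcard, Nat.mul_div_cancel_left _ (r * n).succ_pos]

theorem dyck_sequences_card (r : ℕ) (hr : 0 < r) (n : ℕ) :
    Nat.card {l : List ℤ //
        l.length = (r + 1) * n ∧
        (∀ x ∈ l, x = (r : ℤ) ∨ x = -1) ∧
        l.count (r : ℤ) = n ∧
        (∀ p : List ℤ, p <+: l → 0 ≤ p.sum)} =
      Nat.choose ((r + 1) * n) n / (r * n + 1) :=
  dyck_sequences_card_general r n
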